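/- There is a dimensional constant τ_n such that for every weight w ∈ A_∞, setting ε_w = 1/(1 + τ_n [w]_{A_∞}), one has for every cube Q and every measurable set E ⊆ Q: w(E)/w(Q) ≤ 2 (|E|/|Q|)^{ε_w}. -/

import Mathlib

open MeasureTheory ENNReal NNReal

noncomputable section

/-- An axis-parallel cube in `ℝⁿ`. -/
def IsCube {n : ℕ} (Q : Set (Fin n → ℝ)) : Prop :=
  ∃ (a : Fin n → ℝ) (h : ℝ), 0 < h ∧ Q = {x | ∀ i, a i ≤ x i ∧ x i ≤ a i + h}

/-- Average `(1/|Q|) ∫_Q f` of an `ℝ≥0∞`-valued function over a set. -/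
def cubeAvg {n : ℕ} (f : (Fin n → ℝ) → ℝ≥0∞) (Q : Set (Fin n → ℝ)) : ℝ≥0∞ :=
  (∫⁻ x in Q, f x) / MeasureTheory.volume Q

/-- The uncentered Hardy–Littlewood maximal operator over axis-parallel cubes,
for `ℝ≥0∞`-valued functions. -/
def hlM {n : ℕ} (f : (Fin n → ℝ) → ℝ≥0∞) (x : Fin n → ℝ) : ℝ≥0∞ :=
  ⨆ (Q : Set (Fin n → ℝ)) (_ : IsCube Q) (_ : x ∈ Q), cubeAvg f Q

/-- The Hardy–Littlewood maximal operator applied to a real-valued function: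
`Mf(x) = sup_{Q ∋ x} (1/|Q|) ∫_Q |f|`. -/
def hlMR {n : ℕ} (f : (Fin n → ℝ) → ℝ) : (Fin n → ℝ) → ℝ≥0∞ :=
  hlM (fun y => ENNReal.ofReal |f y|)

/-- A weight: a locally integrable, a.e. positive function. -/
def IsWeight {n : ℕ} (w : (Fin n → ℝ) → ℝ) : Prop :=
  MeasureTheory.LocallyIntegrable w MeasureTheory.volume ∧
    ∀ᵐ x ∂(MeasureTheory.volume : MeasureTheory.Measure (Fin n → ℝ)), 0 < w x

/-- `w(E) = ∫_E w dx`. -/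
def wMeas {n : ℕ} (w : (Fin n → ℝ) → ℝ) (E : Set (Fin n → ℝ)) : ℝ≥0∞ :=
  ∫⁻ x in E, ENNReal.ofReal (w x)

/-- The `A₁` constant `[w]_{A₁} = ess sup_x M w(x) / w(x)`. -/
def a1Const {n : ℕ} (w : (Fin n → ℝ) → ℝ) : ℝ≥0∞ :=
  essSup (fun x => hlM (fun y => ENNReal.ofReal (w y)) x / ENNReal.ofReal (w x))
    MeasureTheory.volume

/-- The Fujii–Wilson `A_∞` constant `[w]_{A_∞} = sup_Q (1/∫_Q w) ∫_Q M(w·1_Q)`. -/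
def aInfConst {n : ℕ} (w : (Fin n → ℝ) → ℝ) : ℝ≥0∞ :=
  ⨆ (Q : Set (Fin n → ℝ)) (_ : IsCube Q),
    (∫⁻ x in Q, hlM (Q.indicator fun y => ENNReal.ofReal (w y)) x) / wMeas w Q

/-- The `A_p` constant, `1 < p < ∞`:
`[w]_{A_p} = sup_Q ⟨w⟩_Q (⟨w^{-1/(p-1)}⟩_Q)^{p-1}`. -/
def apConst {n : ℕ} (p : ℝ) (w : (Fin n → ℝ) → ℝ) : ℝ≥0∞ :=
  ⨆ (Q : Set (Fin n → ℝ)) (_ : IsCube Q),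
    cubeAvg (fun y => ENNReal.ofReal (w y)) Q *
      (cubeAvg (fun y => ENNReal.ofReal (w y) ^ (-(1 / (p - 1)))) Q) ^ (p - 1)

/-- The weak norm `‖g‖_{L^{1,∞}(σ)} = sup_{t>0} t · σ({x : g(x) > t})`
for an `ℝ≥0∞`-valued function `g` and a weight `σ`. -/
def wkNorm {n : ℕ} (g : (Fin n → ℝ) → ℝ≥0∞) (σ : (Fin n → ℝ) → ℝ) : ℝ≥0∞ :=
  ⨆ (t : ℝ≥0) (_ : 0 < t), (t : ℝ≥0∞) * wMeas σ {x | (t : ℝ≥0∞) < g x}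

/-- `‖f‖_{L¹(σ)} = ∫ |f| σ dx`. -/
def l1Norm {n : ℕ} (f : (Fin n → ℝ) → ℝ) (σ : (Fin n → ℝ) → ℝ) : ℝ≥0∞ :=
  ∫⁻ x, ENNReal.ofReal |f x| * ENNReal.ofReal (σ x)

/-- `‖g‖_{L^p(σ)} = (∫ g^p σ dx)^{1/p}` for an `ℝ≥0∞`-valued `g`. -/
def lpNormE {n : ℕ} (p : ℝ) (g : (Fin n → ℝ) → ℝ≥0∞) (σ : (Fin n → ℝ) → ℝ) : ℝ≥0∞ :=
  (∫⁻ x, g x ^ p * ENNReal.ofReal (σ x)) ^ (1 / p)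

/-- A bounded, compactly supported measurable function. -/
def BddCompSupp {n : ℕ} (f : (Fin n → ℝ) → ℝ) : Prop :=
  Measurable f ∧ (∃ C : ℝ, ∀ x, |f x| ≤ C) ∧ HasCompactSupport f

end

/-!
Fix a cube `Q`. A Calderón–Zygmund decomposition of `w` on `Q` at the heights
`2^{(n+1)k} ⟨w⟩_Q`, combined with the Fujii–Wilson bound `∫_Q M(w 1_Q) ≤ [w]_{A_∞} w(Q)`, shows
that the part of `Q` where the dyadic averages of `w` exceed the `m`-th height carries mass at most
`2^{n+1} [w]_{A_∞} w(Q) / m`; off that part `w` is bounded by the height (Lebesgue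
differentiation). With `m ≈ 2^{n+3} [w]_{A_∞}`, every `S ⊆ Q` with `|S| ≤ 2^{-(2+(n+1)m)} |Q|`
therefore has `w(S) ≤ w(Q)/2`. Applying this inside each Calderón–Zygmund cell of the indicator of
`E` at height `β = 2^{-(n+2+(n+1)m)}` halves the mass while the cells have total measure at most
`|E|/β`; by induction `|E| ≤ β^J |Q|` forces `w(E) ≤ 2^{-J} w(Q)`, and choosing `J` optimally
gives the power `(|E|/|Q|)^ε` with `ε = 1/(1 + τ_n [w]_{A_∞})`.
-/

open Set Filter Topology Metric Function

noncomputable section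

namespace AInfty

variable {n : ℕ}

section Cubes

variable {a : Fin n → ℝ} {h : ℝ}

def cubeIcc (a : Fin n → ℝ) (h : ℝ) : Set (Fin n → ℝ) := univ.pi fun i => Icc (a i) (a i + h)

def cubeIco (a : Fin n → ℝ) (h : ℝ) : Set (Fin n → ℝ) := univ.pi fun i => Ico (a i) (a i + h)

@[simp] lemma mem_cubeIcc {x : Fin n → ℝ} : x ∈ cubeIcc a h ↔ ∀ i, a i ≤ x i ∧ x i ≤ a i + h := by
  simp only [cubeIcc, mem_univ_pi, mem_Icc]

@[simp] lemma mem_cubeIco {x : Fin n → ℝ} : x ∈ cubeIco a h ↔ ∀ i, a i ≤ x i ∧ x i < a i + h := by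
  simp only [cubeIco, mem_univ_pi, mem_Ico]

lemma cubeIco_subset_cubeIcc : cubeIco a h ⊆ cubeIcc a h :=
  pi_mono fun _ _ => Ico_subset_Icc_self

lemma measurableSet_cubeIcc : MeasurableSet (cubeIcc a h) := .univ_pi fun _ => measurableSet_Icc

lemma measurableSet_cubeIco : MeasurableSet (cubeIco a h) := .univ_pi fun _ => measurableSet_Ico

lemma isCompact_cubeIcc : IsCompact (cubeIcc a h) := isCompact_univ_pi fun _ => isCompact_Icc

lemma isCube_cubeIcc (hh : 0 < h) : IsCube (cubeIcc a h) := ⟨a, h, hh, by ext; simp⟩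

lemma cubeIco_ae_eq_cubeIcc : cubeIco a h =ᵐ[volume] cubeIcc a h := by
  rw [cubeIcc, pi_univ_Icc]
  exact Measure.univ_pi_Ico_ae_eq_Icc

lemma setLIntegral_cubeIcc (f : (Fin n → ℝ) → ℝ≥0∞) :
    ∫⁻ x in cubeIcc a h, f x = ∫⁻ x in cubeIco a h, f x :=
  setLIntegral_congr cubeIco_ae_eq_cubeIcc.symm

lemma volume_cubeIco : volume (cubeIco a h) = ENNReal.ofReal h ^ n := by
  simp [cubeIco, volume_pi_pi, Real.volume_Ico]

lemma volume_cubeIcc : volume (cubeIcc a h) = volume (cubeIco a h) :=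
  measure_congr cubeIco_ae_eq_cubeIcc.symm

lemma volume_cubeIco_ne_zero (hh : 0 < h) : volume (cubeIco a h) ≠ 0 := by
  simp [volume_cubeIco, hh]

lemma volume_cubeIco_ne_top : volume (cubeIco a h) ≠ ⊤ := by
  simp [cubeIco, volume_pi_pi, Real.volume_Ico]

lemma cubeIcc_eq_closedBall (hh : 0 ≤ h) :
    cubeIcc a h = closedBall (fun i => a i + h / 2) (h / 2) := by
  ext x
  simp only [mem_cubeIcc, mem_closedBall, dist_pi_le_iff (by positivity : 0 ≤ h / 2),
    Real.dist_eq, abs_sub_le_iff]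
  exact forall_congr' fun i => by constructor <;> intro <;> constructor <;> linarith

end Cubes

section DyadicGrid

variable {a : Fin n → ℝ} {h : ℝ} {k : ℕ} {v : Fin n → ℕ} {x : Fin n → ℝ}

def side (h : ℝ) (k : ℕ) : ℝ := h / 2 ^ k

def corner (a : Fin n → ℝ) (h : ℝ) (k : ℕ) (v : Fin n → ℕ) : Fin n → ℝ :=
  fun i => a i + v i * side h k

/-- The dyadic subcube of generation `k` at position `v` of `cubeIco a h`; half-open, so that
each generation tiles the cube. -/
def cell (a : Fin n → ℝ) (h : ℝ) (k : ℕ) (v : Fin n → ℕ) : Set (Fin n → ℝ) :=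
  cubeIco (corner a h k v) (side h k)

def index (a : Fin n → ℝ) (h : ℝ) (k : ℕ) (x : Fin n → ℝ) : Fin n → ℕ :=
  fun i => ⌊(x i - a i) / side h k⌋₊

def InGrid (k : ℕ) (v : Fin n → ℕ) : Prop := ∀ i, v i < 2 ^ k

lemma side_pos (hh : 0 < h) (k : ℕ) : 0 < side h k := div_pos hh (by positivity)

@[simp] lemma side_zero : side h 0 = h := by simp [side]

lemma side_eq_two_mul_side_succ : side h k = 2 * side h (k + 1) := by
  rw [side, side, pow_succ]; field_simp

lemma side_eq_side_mul_pow {K : ℕ} (hkK : k ≤ K) : side h k = side h K * (2 ^ (K - k) : ℕ) := by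
  rw [side, side, ← Nat.add_sub_cancel' hkK, pow_add]
  push_cast
  field_simp
  simp

lemma two_pow_mul_side : 2 ^ k * side h k = h := by rw [side]; field_simp

lemma tendsto_side (hh : 0 < h) : Tendsto (side h) atTop (𝓝[>] 0) := by
  refine tendsto_nhdsWithin_of_tendsto_nhds_of_eventually_within _ ?_
    (.of_forall fun k => side_pos hh k)
  have hside : side h = fun k : ℕ => h * 2⁻¹ ^ k := by
    funext k; rw [side, div_eq_mul_inv, inv_pow]
  simpa [hside] using
    (tendsto_pow_atTop_nhds_zero_of_lt_one (by norm_num : (0 : ℝ) ≤ 2⁻¹) (by norm_num)).const_mul h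

@[simp] lemma cell_zero : cell a h 0 0 = cubeIco a h := by
  rw [cell, side_zero]; congr 1; funext i; simp [corner]

lemma mem_cell : x ∈ cell a h k v ↔
    ∀ i, a i + v i * side h k ≤ x i ∧ x i < a i + v i * side h k + side h k := mem_cubeIco

lemma measurableSet_cell : MeasurableSet (cell a h k v) := measurableSet_cubeIco

lemma volume_cell : volume (cell a h k v) = ENNReal.ofReal (side h k) ^ n := volume_cubeIco

lemma volume_cell_ne_zero (hh : 0 < h) : volume (cell a h k v) ≠ 0 :=
  volume_cubeIco_ne_zero (side_pos hh k)

lemma volume_cell_ne_top : volume (cell a h k v) ≠ ⊤ := volume_cubeIco_ne_top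

lemma index_eq_of_mem_cell (hh : 0 < h) (hx : x ∈ cell a h k v) : index a h k x = v := by
  funext i
  obtain ⟨h1, h2⟩ := mem_cell.1 hx i
  have hs := side_pos hh k
  have hl : (v i : ℝ) ≤ (x i - a i) / side h k := by rw [le_div_iff₀ hs]; linarith
  have hu : (x i - a i) / side h k < v i + 1 := by rw [div_lt_iff₀ hs]; linarith
  exact (Nat.floor_eq_iff ((Nat.cast_nonneg _).trans hl)).2 ⟨hl, hu⟩

lemma mem_cell_index (hh : 0 < h) (hx : ∀ i, a i ≤ x i) (k : ℕ) :
    x ∈ cell a h k (index a h k x) := by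
  refine mem_cell.2 fun i => ?_
  have hs := side_pos hh k
  have h0 : 0 ≤ (x i - a i) / side h k := div_nonneg (by linarith [hx i]) hs.le
  have h1 := (le_div_iff₀ hs).1 (Nat.floor_le h0)
  have h2 := (div_lt_iff₀ hs).1 (Nat.lt_floor_add_one ((x i - a i) / side h k))
  simp only [index]
  constructor <;> linarith

lemma index_eq_div (k : ℕ) {K : ℕ} (hkK : k ≤ K) (i : Fin n) :
    index a h k x i = index a h K x i / 2 ^ (K - k) := by
  simp only [index]
  rw [side_eq_side_mul_pow hkK, ← div_div, ← Nat.floor_div_natCast]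

lemma inGrid_index (hh : 0 < h) (hx : x ∈ cubeIco a h) (k : ℕ) : InGrid k (index a h k x) := by
  intro i
  obtain ⟨h1, h2⟩ := mem_cubeIco.1 hx i
  have hs := side_pos hh k
  rw [index, Nat.floor_lt (div_nonneg (by linarith) hs.le), div_lt_iff₀ hs]
  push_cast
  linarith [two_pow_mul_side (h := h) (k := k)]

lemma le_corner_and_corner_add_side_le (hh : 0 < h) (hv : InGrid k v) (i : Fin n) :
    a i ≤ corner a h k v i ∧ corner a h k v i + side h k ≤ a i + h := by
  have hs := side_pos hh k
  have hvi : (v i : ℝ) + 1 ≤ 2 ^ k := by exact_mod_cast hv i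
  have := two_pow_mul_side (h := h) (k := k)
  simp only [corner]
  constructor <;> nlinarith [(Nat.cast_nonneg (v i) : (0 : ℝ) ≤ v i)]

lemma cell_subset_cubeIco (hh : 0 < h) (hv : InGrid k v) : cell a h k v ⊆ cubeIco a h :=
  fun x hx => mem_cubeIco.2 fun i => by
    have := le_corner_and_corner_add_side_le (a := a) hh hv i
    have := mem_cubeIco.1 hx i
    constructor <;> linarith

lemma cubeIcc_corner_subset (hh : 0 < h) (hv : InGrid k v) :
    cubeIcc (corner a h k v) (side h k) ⊆ cubeIcc a h :=
  fun x hx => mem_cubeIcc.2 fun i => by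
    have := le_corner_and_corner_add_side_le (a := a) hh hv i
    have := mem_cubeIcc.1 hx i
    constructor <;> linarith

lemma cell_succ_subset (hh : 0 < h) : cell a h (k + 1) v ⊆ cell a h k (fun i => v i / 2) := by
  intro x hx
  have hx' : ∀ i, a i ≤ x i := fun i => by
    nlinarith [(mem_cell.1 hx i).1, side_pos hh (k + 1), (Nat.cast_nonneg (v i) : (0 : ℝ) ≤ v i)]
  have hparent : index a h k x = fun i => v i / 2 := by
    funext i
    rw [index_eq_div k (Nat.le_add_right k 1) i, index_eq_of_mem_cell hh hx,
      Nat.add_sub_cancel_left, pow_one]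
  exact hparent ▸ mem_cell_index hh hx' k

lemma volume_cell_eq_two_pow_mul (v' : Fin n → ℕ) :
    volume (cell a h k v') = 2 ^ n * volume (cell a h (k + 1) v) := by
  rw [volume_cell, volume_cell, side_eq_two_mul_side_succ,
    ENNReal.ofReal_mul zero_le_two, mul_pow, ENNReal.ofReal_ofNat]

end DyadicGrid

section CalderonZygmund

variable {a : Fin n → ℝ} {h : ℝ} {f : (Fin n → ℝ) → ℝ≥0∞} {t : ℝ≥0∞} {x : Fin n → ℝ}

def cellAvg (a : Fin n → ℝ) (h : ℝ) (f : (Fin n → ℝ) → ℝ≥0∞) (k : ℕ) (v : Fin n → ℕ) : ℝ≥0∞ :=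
  (∫⁻ x in cell a h k v, f x) / volume (cell a h k v)

/-- The maximal dyadic cells on which the average of `f` exceeds `t`;
`fun i => p.2 i / 2 ^ (p.1 - k)` is the ancestor of generation `k` of the cell `p`. -/
def IsCZCell (a : Fin n → ℝ) (h : ℝ) (f : (Fin n → ℝ) → ℝ≥0∞) (t : ℝ≥0∞)
    (p : ℕ × (Fin n → ℕ)) : Prop :=
  InGrid p.1 p.2 ∧ t < cellAvg a h f p.1 p.2 ∧
    ∀ k < p.1, cellAvg a h f k (fun i => p.2 i / 2 ^ (p.1 - k)) ≤ t

def czSet (a : Fin n → ℝ) (h : ℝ) (f : (Fin n → ℝ) → ℝ≥0∞) (t : ℝ≥0∞) : Set (Fin n → ℝ) :=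
  ⋃ p : {p // IsCZCell a h f t p}, cell a h p.1.1 p.1.2

lemma cellAvg_mul_volume (hh : 0 < h) (f : (Fin n → ℝ) → ℝ≥0∞) (k : ℕ) (v : Fin n → ℕ) :
    cellAvg a h f k v * volume (cell a h k v) = ∫⁻ x in cell a h k v, f x :=
  ENNReal.div_mul_cancel (volume_cell_ne_zero hh) volume_cell_ne_top

lemma mem_czSet (hh : 0 < h) :
    x ∈ czSet a h f t ↔ x ∈ cubeIco a h ∧ ∃ k, t < cellAvg a h f k (index a h k x) := by
  classical
  constructor
  · intro hx
    obtain ⟨⟨p, hp⟩, hxp⟩ := mem_iUnion.1 hx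
    exact ⟨cell_subset_cubeIco hh hp.1 hxp, p.1, index_eq_of_mem_cell hh hxp ▸ hp.2.1⟩
  · rintro ⟨hxQ, hex⟩
    have hx : ∀ i, a i ≤ x i := fun i => (mem_cubeIco.1 hxQ i).1
    have hancestor : ∀ k ≤ Nat.find hex,
        (fun i => index a h (Nat.find hex) x i / 2 ^ (Nat.find hex - k)) = index a h k x :=
      fun k hk => funext fun i => (index_eq_div k hk i).symm
    refine mem_iUnion.2 ⟨⟨(Nat.find hex, index a h (Nat.find hex) x),
      inGrid_index hh hxQ _, Nat.find_spec hex, fun k hk => ?_⟩, mem_cell_index hh hx _⟩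
    rw [hancestor k hk.le]
    exact not_lt.1 (Nat.find_min hex hk)

lemma czSet_subset_cubeIco (hh : 0 < h) : czSet a h f t ⊆ cubeIco a h :=
  fun _ hx => ((mem_czSet hh).1 hx).1

lemma czSet_anti (hh : 0 < h) {t' : ℝ≥0∞} (htt' : t ≤ t') : czSet a h f t' ⊆ czSet a h f t :=
  fun _ hx => by
    obtain ⟨hxQ, k, hk⟩ := (mem_czSet hh).1 hx
    exact (mem_czSet hh).2 ⟨hxQ, k, htt'.trans_lt hk⟩

lemma measurableSet_czSet : MeasurableSet (czSet a h f t) :=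
  .iUnion fun _ => measurableSet_cell

lemma pairwise_disjoint_czCells (hh : 0 < h) :
    Pairwise (Disjoint on fun p : {p // IsCZCell a h f t p} => cell a h p.1.1 p.1.2) := by
  have key : ∀ p q : {p // IsCZCell a h f t p}, p.1.1 ≤ q.1.1 → p ≠ q →
      Disjoint (cell a h p.1.1 p.1.2) (cell a h q.1.1 q.1.2) := by
    rintro ⟨p, hp⟩ ⟨q, hq⟩ hle hpq
    refine disjoint_left.2 fun x hxp hxq => ?_
    have hip := index_eq_of_mem_cell hh hxp
    have hiq := index_eq_of_mem_cell hh hxq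
    rcases hle.eq_or_lt with heq | hlt
    · exact hpq (Subtype.ext (Prod.ext heq (by rw [← hip, ← hiq, heq])))
    · have hancestor : (fun i => q.2 i / 2 ^ (q.1 - p.1)) = p.2 := by
        funext i; rw [← hip, ← hiq]; exact (index_eq_div p.1 hlt.le i).symm
      exact (hq.2.2 p.1 hlt).not_gt (hancestor ▸ hp.2.1)
  intro p q hpq
  rcases le_total p.1.1 q.1.1 with hle | hle
  · exact key p q hle hpq
  · exact (key q p hle hpq.symm).symm

lemma lintegral_czSet (hh : 0 < h) (g : (Fin n → ℝ) → ℝ≥0∞) :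
    ∫⁻ x in czSet a h f t, g x
      = ∑' p : {p // IsCZCell a h f t p}, ∫⁻ x in cell a h p.1.1 p.1.2, g x :=
  lintegral_iUnion (fun _ => measurableSet_cell) (pairwise_disjoint_czCells hh) g

lemma mul_volume_czSet_le (hh : 0 < h) :
    t * volume (czSet a h f t) ≤ ∫⁻ x in czSet a h f t, f x := by
  rw [← setLIntegral_const, lintegral_czSet hh, lintegral_czSet hh]
  refine ENNReal.tsum_le_tsum fun p => ?_
  rw [setLIntegral_const, ← cellAvg_mul_volume hh]
  exact mul_le_mul_left p.2.2.1.le _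

lemma lintegral_cell_le_of_isCZCell (hh : 0 < h) (ht : cellAvg a h f 0 0 ≤ t)
    {p : ℕ × (Fin n → ℕ)} (hp : IsCZCell a h f t p) :
    ∫⁻ x in cell a h p.1 p.2, f x ≤ 2 ^ n * t * volume (cell a h p.1 p.2) := by
  obtain ⟨_ | k, v⟩ := p
  · have hv : v = 0 := funext fun i => Nat.lt_one_iff.1 (hp.1 i)
    subst hv
    exact absurd hp.2.1 (not_lt.2 ht)
  · have hparent : cellAvg a h f k (fun i => v i / 2) ≤ t := by
      simpa using hp.2.2 k k.lt_succ_self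
    calc ∫⁻ x in cell a h (k + 1) v, f x
        ≤ ∫⁻ x in cell a h k (fun i => v i / 2), f x := lintegral_mono_set (cell_succ_subset hh)
      _ = cellAvg a h f k (fun i => v i / 2) * volume (cell a h k (fun i => v i / 2)) :=
          (cellAvg_mul_volume hh f _ _).symm
      _ ≤ t * (2 ^ n * volume (cell a h (k + 1) v)) := by
          rw [volume_cell_eq_two_pow_mul (v := v)]; exact mul_le_mul_left hparent _
      _ = 2 ^ n * t * volume (cell a h (k + 1) v) := by ring

lemma lintegral_czSet_le (hh : 0 < h) (ht : cellAvg a h f 0 0 ≤ t) :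
    ∫⁻ x in czSet a h f t, f x ≤ 2 ^ n * t * volume (czSet a h f t) := by
  rw [← setLIntegral_const, lintegral_czSet hh, lintegral_czSet hh]
  refine ENNReal.tsum_le_tsum fun p => ?_
  rw [setLIntegral_const]
  exact lintegral_cell_le_of_isCZCell hh ht p.2

end CalderonZygmund

section MaximalFunction

variable {a : Fin n → ℝ} {h : ℝ} {f : (Fin n → ℝ) → ℝ≥0∞} {t : ℝ≥0∞} {x : Fin n → ℝ}

lemma cubeAvg_le_hlM {Q : Set (Fin n → ℝ)} (hQ : IsCube Q) (hx : x ∈ Q) :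
    cubeAvg f Q ≤ hlM f x :=
  le_iSup_of_le Q (le_iSup_of_le hQ (le_iSup_of_le hx le_rfl))

lemma cubeAvg_indicator_eq_cellAvg (hh : 0 < h) {k : ℕ} {v : Fin n → ℕ} (hv : InGrid k v) :
    cubeAvg ((cubeIcc a h).indicator f) (cubeIcc (corner a h k v) (side h k)) =
      cellAvg a h f k v := by
  rw [cubeAvg, cellAvg, volume_cubeIcc, setLIntegral_congr_fun measurableSet_cubeIcc
    fun y hy => indicator_of_mem (cubeIcc_corner_subset hh hv hy) f, setLIntegral_cubeIcc]
  rfl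

lemma lt_hlM_of_mem_czSet (hh : 0 < h) (hx : x ∈ czSet a h f t) :
    t < hlM ((cubeIcc a h).indicator f) x := by
  obtain ⟨⟨p, hp⟩, hxp⟩ := mem_iUnion.1 hx
  calc t < cellAvg a h f p.1 p.2 := hp.2.1
    _ = _ := (cubeAvg_indicator_eq_cellAvg hh hp.1).symm
    _ ≤ _ := cubeAvg_le_hlM (isCube_cubeIcc (side_pos hh _)) (cubeIco_subset_cubeIcc hxp)

lemma tendsto_cubeIcc_index_filterAt (hh : 0 < h) (hx : x ∈ cubeIco a h) :
    Tendsto (fun k => cubeIcc (corner a h k (index a h k x)) (side h k)) atTop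
      ((IsUnifLocDoublingMeasure.vitaliFamily volume 1).filterAt x) := by
  set c : ℕ → Fin n → ℝ := fun k i => corner a h k (index a h k x) i + side h (k + 1)
  have hball : ∀ k, cubeIcc (corner a h k (index a h k x)) (side h k)
      = closedBall (c k) (side h (k + 1)) := fun k => by
    rw [cubeIcc_eq_closedBall (side_pos hh k).le, side_eq_two_mul_side_succ (k := k),
      mul_div_cancel_left₀ _ two_ne_zero]
  simp only [hball]
  refine IsUnifLocDoublingMeasure.tendsto_closedBall_filterAt volume _ _
    ((tendsto_side hh).comp (tendsto_add_atTop_nat 1)) (.of_forall fun k => ?_)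
  rw [one_mul, ← hball]
  exact cubeIco_subset_cubeIcc (mem_cell_index hh (fun i => (mem_cubeIco.1 hx i).1) k)

/-- Lebesgue's differentiation theorem along the dyadic cells containing a point. -/
lemma ae_mem_czSet (hh : 0 < h) (hf : AEMeasurable f) (hfin : ∫⁻ x in cubeIco a h, f x ≠ ⊤)
    (t : ℝ≥0∞) : ∀ᵐ x, x ∈ cubeIco a h → t < f x → x ∈ czSet a h f t := by
  have hF : AEMeasurable ((cubeIcc a h).indicator f) := hf.indicator measurableSet_cubeIcc
  have hFfin : ∫⁻ x, (cubeIcc a h).indicator f x ≠ ⊤ := by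
    rwa [lintegral_indicator measurableSet_cubeIcc, setLIntegral_cubeIcc]
  filter_upwards [(IsUnifLocDoublingMeasure.vitaliFamily volume 1).ae_tendsto_lintegral_div
    hF hFfin] with x hx hxQ htx
  have hlim : Tendsto (fun k => cellAvg a h f k (index a h k x)) atTop (𝓝 (f x)) := by
    have := hx.comp (tendsto_cubeIcc_index_filterAt hh hxQ)
    rw [indicator_of_mem (cubeIco_subset_cubeIcc hxQ)] at this
    refine this.congr fun k => ?_
    exact cubeAvg_indicator_eq_cellAvg hh (inGrid_index hh hxQ k)
  obtain ⟨k, hk⟩ := (hlim.eventually (lt_mem_nhds htx)).exists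
  exact (mem_czSet hh).2 ⟨hxQ, k, hk⟩

end MaximalFunction

section StoppingTimeSum

variable {a : Fin n → ℝ} {h : ℝ} {f : (Fin n → ℝ) → ℝ≥0∞}

lemma pairwise_disjoint_sdiff_succ {α : Type*} {s : ℕ → Set α} (hs : Antitone s) :
    Pairwise (Disjoint on fun k => s k \ s (k + 1)) := by
  have key : ∀ j k, j < k → Disjoint (s j \ s (j + 1)) (s k \ s (k + 1)) := fun j k hjk =>
    disjoint_left.2 fun _ hj hk => hj.2 (hs hjk hk.1)
  intro j k hjk
  rcases lt_or_gt_of_ne hjk with hlt | hlt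
  · exact key j k hlt
  · exact (key k j hlt).symm

lemma lintegral_czSet_le_add (hh : 0 < h) {t : ℝ≥0∞} (ht : cellAvg a h f 0 0 ≤ t) :
    ∫⁻ x in czSet a h f t, f x ≤
      2 ^ n * (t * volume (czSet a h f t \ czSet a h f (2 ^ (n + 1) * t))) +
        (∫⁻ x in czSet a h f (2 ^ (n + 1) * t), f x) / 2 := by
  set Ω := czSet a h f t
  set Ω' := czSet a h f (2 ^ (n + 1) * t)
  have hsub : Ω' ⊆ Ω := czSet_anti hh (le_mul_of_one_le_left' (one_le_pow₀ one_le_two))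
  have hsplit : volume Ω = volume Ω' + volume (Ω \ Ω') := by
    rw [← measure_inter_add_sdiff Ω measurableSet_czSet, inter_eq_right.2 hsub]
  have hnext : 2 ^ n * t * volume Ω' ≤ (∫⁻ x in Ω', f x) / 2 := by
    rw [ENNReal.le_div_iff_mul_le (.inl two_ne_zero) (.inl ENNReal.ofNat_ne_top)]
    calc 2 ^ n * t * volume Ω' * 2 = 2 ^ (n + 1) * t * volume Ω' := by ring
      _ ≤ ∫⁻ x in Ω', f x := mul_volume_czSet_le hh
  calc ∫⁻ x in Ω, f x ≤ 2 ^ n * t * volume Ω := lintegral_czSet_le hh ht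
    _ = 2 ^ n * (t * volume (Ω \ Ω')) + 2 ^ n * t * volume Ω' := by rw [hsplit]; ring
    _ ≤ 2 ^ n * (t * volume (Ω \ Ω')) + (∫⁻ x in Ω', f x) / 2 := by gcongr

lemma sum_mul_volume_czSet_sdiff_le (hh : 0 < h) {t : ℕ → ℝ≥0∞} (ht : Monotone t)
    (s : Finset ℕ) :
    ∑ k ∈ s, t k * volume (czSet a h f (t k) \ czSet a h f (t (k + 1))) ≤
      ∫⁻ x in cubeIco a h, hlM ((cubeIcc a h).indicator f) x := by
  set D : ℕ → Set (Fin n → ℝ) := fun k => czSet a h f (t k) \ czSet a h f (t (k + 1))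
  have hD : Pairwise (Disjoint on D) :=
    pairwise_disjoint_sdiff_succ fun _ _ hjk => czSet_anti hh (ht hjk)
  calc ∑ k ∈ s, t k * volume (D k)
      ≤ ∑ k ∈ s, ∫⁻ x in D k, hlM ((cubeIcc a h).indicator f) x := by
        refine Finset.sum_le_sum fun k _ => ?_
        rw [← setLIntegral_const]
        exact setLIntegral_mono' (measurableSet_czSet.diff measurableSet_czSet)
          fun x hx => (lt_hlM_of_mem_czSet hh hx.1).le
    _ = ∫⁻ x in ⋃ k ∈ s, D k, hlM ((cubeIcc a h).indicator f) x :=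
        (lintegral_biUnion_finset (fun j _ k _ hjk => hD hjk)
          (fun _ _ => measurableSet_czSet.diff measurableSet_czSet) _).symm
    _ ≤ _ := lintegral_mono_set (iUnion₂_subset fun k _ => sdiff_subset.trans
        (czSet_subset_cubeIco hh))

lemma _root_.ENNReal.le_two_mul_of_le_add_half {S c : ℝ≥0∞} (hS : S ≠ ⊤) (h : S ≤ c + S / 2) :
    S ≤ 2 * c := by
  have := tsub_le_iff_right.2 h
  rwa [ENNReal.sub_half hS, ENNReal.div_le_iff_le_mul (.inl two_ne_zero)
    (.inl ENNReal.ofNat_ne_top), mul_comm] at this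

def czLevel (a : Fin n → ℝ) (h : ℝ) (f : (Fin n → ℝ) → ℝ≥0∞) (k : ℕ) : ℝ≥0∞ :=
  (2 ^ (n + 1)) ^ k * cellAvg a h f 0 0

lemma natCast_mul_lintegral_czSet_le (hh : 0 < h) (hfin : ∫⁻ x in cubeIco a h, f x ≠ ⊤)
    (m : ℕ) :
    m * ∫⁻ x in czSet a h f (czLevel a h f m), f x ≤
      2 ^ (n + 1) * ∫⁻ x in cubeIco a h, hlM ((cubeIcc a h).indicator f) x := by
  set C := ∫⁻ x in cubeIco a h, hlM ((cubeIcc a h).indicator f) x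
  set mass : ℕ → ℝ≥0∞ := fun k => ∫⁻ x in czSet a h f (czLevel a h f k), f x
  set d : ℕ → ℝ≥0∞ := fun k => czLevel a h f k *
    volume (czSet a h f (czLevel a h f k) \ czSet a h f (czLevel a h f (k + 1)))
  have hmono : Monotone (czLevel a h f) := fun j k hjk =>
    mul_le_mul_left (pow_le_pow_right₀ (one_le_pow₀ one_le_two) hjk) _
  have hanti : Antitone mass := fun j k hjk => lintegral_mono_set (czSet_anti hh (hmono hjk))
  have hstep : ∀ k, mass k ≤ 2 ^ n * d k + mass (k + 1) / 2 := fun k => by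
    have hsucc : czLevel a h f (k + 1) = 2 ^ (n + 1) * czLevel a h f k := by
      simp only [czLevel]; ring
    have hσ : cellAvg a h f 0 0 ≤ czLevel a h f k :=
      le_mul_of_one_le_left' (one_le_pow₀ (one_le_pow₀ one_le_two))
    simpa only [mass, d, hsucc] using lintegral_czSet_le_add hh hσ
  set S := ∑ k ∈ Finset.Icc 1 m, mass k
  have hS : S ≤ 2 ^ n * C + S / 2 :=
    calc S ≤ ∑ k ∈ Finset.Icc 1 m, (2 ^ n * d k + mass (k + 1) / 2) :=
          Finset.sum_le_sum fun k _ => hstep k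
      _ = 2 ^ n * ∑ k ∈ Finset.Icc 1 m, d k + (∑ k ∈ Finset.Icc 1 m, mass (k + 1)) / 2 := by
          simp only [Finset.sum_add_distrib, Finset.mul_sum, div_eq_mul_inv, Finset.sum_mul]
      _ ≤ 2 ^ n * C + S / 2 := by
          gcongr
          · exact sum_mul_volume_czSet_sdiff_le hh hmono _
          · exact Finset.sum_le_sum fun k _ => hanti (Nat.le_succ k)
  have hS_ne_top : S ≠ ⊤ := ENNReal.sum_ne_top.2 fun k _ =>
    ne_top_of_le_ne_top hfin (lintegral_mono_set (czSet_subset_cubeIco hh))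
  calc m * mass m = ∑ _k ∈ Finset.Icc 1 m, mass m := by simp
    _ ≤ S := Finset.sum_le_sum fun k hk => hanti (Finset.mem_Icc.1 hk).2
    _ ≤ 2 * (2 ^ n * C) := ENNReal.le_two_mul_of_le_add_half hS_ne_top hS
    _ = 2 ^ (n + 1) * C := by ring

end StoppingTimeSum

/-- `[f]_{A_∞} ≤ A` in the sense of Fujii–Wilson, for a density `f` integrable on cubes. -/
structure FujiiWilsonBound (f : (Fin n → ℝ) → ℝ≥0∞) (A : ℝ≥0∞) : Prop where
  aemeasurable : AEMeasurable f
  setLIntegral_ne_top (a : Fin n → ℝ) (h : ℝ) : ∫⁻ x in cubeIco a h, f x ≠ ⊤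
  setLIntegral_hlM_le (a : Fin n → ℝ) {h : ℝ} (hh : 0 < h) :
    ∫⁻ x in cubeIco a h, hlM ((cubeIcc a h).indicator f) x ≤ A * ∫⁻ x in cubeIco a h, f x

lemma two_pow_mul_two_inv_pow (j : ℕ) : (2 : ℝ≥0∞) ^ j * 2⁻¹ ^ j = 1 := by
  rw [← mul_pow, ENNReal.mul_inv_cancel two_ne_zero ENNReal.ofNat_ne_top, one_pow]

section Decay

variable {a : Fin n → ℝ} {h : ℝ} {f : (Fin n → ℝ) → ℝ≥0∞} {A : ℝ≥0∞}

lemma setLIntegral_czSet_czLevel_le (hf : FujiiWilsonBound f A) (hh : 0 < h) {m : ℕ}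
    (hm0 : m ≠ 0) (hm : 2 ^ (n + 3) * A ≤ m) :
    ∫⁻ x in czSet a h f (czLevel a h f m), f x ≤ (∫⁻ x in cubeIco a h, f x) / 4 := by
  set W := ∫⁻ x in cubeIco a h, f x
  set w := ∫⁻ x in czSet a h f (czLevel a h f m), f x
  have h4 : m * (4 * w) ≤ m * W :=
    calc m * (4 * w) = 4 * (m * w) := by ring
      _ ≤ 4 * (2 ^ (n + 1) * (A * W)) := by
        gcongr 4 * ?_
        exact (natCast_mul_lintegral_czSet_le hh (hf.setLIntegral_ne_top a h) m).trans
          (mul_le_mul_right (hf.setLIntegral_hlM_le a hh) _)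
      _ = 2 ^ (n + 3) * A * W := by ring
      _ ≤ m * W := by gcongr
  rw [ENNReal.le_div_iff_mul_le (.inl (by norm_num)) (.inl (by norm_num)), mul_comm]
  exact (ENNReal.mul_le_mul_iff_right (Nat.cast_ne_zero.2 hm0) (ENNReal.natCast_ne_top m)).1 h4

lemma setLIntegral_sdiff_czSet_le (hf : FujiiWilsonBound f A) (hh : 0 < h) {S : Set (Fin n → ℝ)}
    (hS : MeasurableSet S) (hSQ : S ⊆ cubeIco a h) (t : ℝ≥0∞) :
    ∫⁻ x in S \ czSet a h f t, f x ≤ t * volume S := by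
  have hae : ∀ᵐ x ∂volume.restrict (S \ czSet a h f t), f x ≤ t := by
    rw [ae_restrict_iff' (hS.diff measurableSet_czSet)]
    filter_upwards [ae_mem_czSet hh hf.aemeasurable (hf.setLIntegral_ne_top a h) t]
      with x hx hxS
    exact not_lt.1 fun hlt => hxS.2 (hx (hSQ hxS.1) hlt)
  calc ∫⁻ x in S \ czSet a h f t, f x ≤ ∫⁻ _ in S \ czSet a h f t, t := lintegral_mono_ae hae
    _ ≤ t * volume S := by rw [setLIntegral_const]; gcongr; exact sdiff_subset

/-- Off the Calderón–Zygmund set at height `czLevel a h f m` the density is at most that height,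
and on it the mass is at most a quarter of the total. -/
lemma setLIntegral_le_half (hf : FujiiWilsonBound f A) (hh : 0 < h) {m : ℕ} (hm0 : m ≠ 0)
    (hm : 2 ^ (n + 3) * A ≤ m) {S : Set (Fin n → ℝ)} (hS : MeasurableSet S)
    (hSQ : S ⊆ cubeIco a h) (hvol : volume S ≤ 2⁻¹ ^ (2 + (n + 1) * m) * volume (cubeIco a h)) :
    ∫⁻ x in S, f x ≤ (∫⁻ x in cubeIco a h, f x) / 2 := by
  set W := ∫⁻ x in cubeIco a h, f x
  set Ω := czSet a h f (czLevel a h f m)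
  have hoff : ∫⁻ x in S \ Ω, f x ≤ W / 4 :=
    calc ∫⁻ x in S \ Ω, f x ≤ czLevel a h f m * volume S :=
          setLIntegral_sdiff_czSet_le hf hh hS hSQ _
      _ ≤ czLevel a h f m * (2⁻¹ ^ (2 + (n + 1) * m) * volume (cubeIco a h)) := by gcongr
      _ = 2⁻¹ ^ 2 * ((2 ^ ((n + 1) * m) * 2⁻¹ ^ ((n + 1) * m)) *
            (cellAvg a h f 0 0 * volume (cell a h 0 0))) := by
          rw [czLevel, cell_zero, ← pow_mul]; ring
      _ = W / 4 := by
          rw [two_pow_mul_two_inv_pow, cellAvg_mul_volume hh, cell_zero, one_mul,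
            ← ENNReal.inv_pow, ENNReal.div_eq_inv_mul]
          norm_num [W]
  calc ∫⁻ x in S, f x ≤ (∫⁻ x in S \ Ω, f x) + ∫⁻ x in Ω, f x :=
        (lintegral_mono_set (subset_sdiff_union S Ω)).trans (lintegral_union_le f _ _)
    _ ≤ W / 4 + W / 4 := add_le_add hoff (setLIntegral_czSet_czLevel_le (a := a) hf hh hm0 hm)
    _ = W / 2 := by
        rw [ENNReal.div_add_div_same, ← two_mul, show (4 : ℝ≥0∞) = 2 * 2 by norm_num,
          ENNReal.mul_div_mul_left _ _ two_ne_zero ENNReal.ofNat_ne_top]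

end Decay

section Iteration

variable {a : Fin n → ℝ} {h : ℝ} {f : (Fin n → ℝ) → ℝ≥0∞} {A : ℝ≥0∞} {E : Set (Fin n → ℝ)}

lemma setLIntegral_indicator_one (hE : MeasurableSet E) (s : Set (Fin n → ℝ)) :
    ∫⁻ x in s, E.indicator 1 x = volume (E ∩ s) := by
  rw [lintegral_indicator_one hE, Measure.restrict_apply hE]

lemma mul_volume_czSet_indicator_le (hh : 0 < h) (hE : MeasurableSet E) (t : ℝ≥0∞) :
    t * volume (czSet a h (E.indicator 1) t) ≤ volume E :=
  (mul_volume_czSet_le hh).trans_eq (setLIntegral_indicator_one hE _) |>.trans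
    (measure_mono inter_subset_left)

/-- One generation of the iteration: `E` is covered, up to a null set, by the Calderón–Zygmund
cells of its indicator, and `E` has small relative measure in each of them. -/
lemma setLIntegral_le_half_setLIntegral_czSet (hf : FujiiWilsonBound f A) (hh : 0 < h)
    {m : ℕ} (hm0 : m ≠ 0) (hm : 2 ^ (n + 3) * A ≤ m) (hE : MeasurableSet E)
    (hEQ : E ⊆ cubeIco a h) {b : ℝ≥0∞} (hb1 : b < 1) (hb : 2 ^ n * b ≤ 2⁻¹ ^ (2 + (n + 1) * m))
    (hEb : cellAvg a h (E.indicator 1) 0 0 ≤ b) :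
    ∫⁻ x in E, f x ≤ (∫⁻ x in czSet a h (E.indicator 1) b, f x) / 2 := by
  set Ω := czSet a h (E.indicator 1) b
  have hcover : E ≤ᵐ[volume] (E ∩ Ω : Set (Fin n → ℝ)) := by
    filter_upwards [ae_mem_czSet hh (aemeasurable_one.indicator hE)
      ((setLIntegral_indicator_one hE _).trans_ne
        (measure_ne_top_of_subset inter_subset_right volume_cubeIco_ne_top)) b] with x hx hxE
    exact ⟨hxE, hx (hEQ hxE) (by simpa [indicator_of_mem hxE] using hb1)⟩
  have hcell : ∀ p : {p // IsCZCell a h (E.indicator 1) b p},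
      ∫⁻ x in E ∩ cell a h p.1.1 p.1.2, f x ≤ (∫⁻ x in cell a h p.1.1 p.1.2, f x) / 2 := by
    rintro ⟨⟨k, v⟩, hp⟩
    have hcz := lintegral_cell_le_of_isCZCell hh hEb hp
    refine setLIntegral_le_half hf (side_pos hh k) hm0 hm (hE.inter measurableSet_cell)
      inter_subset_right ?_
    calc volume (E ∩ cell a h k v) = ∫⁻ x in cell a h k v, E.indicator 1 x :=
          (setLIntegral_indicator_one hE _).symm
      _ ≤ 2 ^ n * b * volume (cell a h k v) := hcz
      _ ≤ 2⁻¹ ^ (2 + (n + 1) * m) * volume (cell a h k v) := by gcongr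
  have hind : ∀ s, ∫⁻ x in s, E.indicator f x = ∫⁻ x in E ∩ s, f x := fun s => by
    rw [lintegral_indicator hE, Measure.restrict_restrict hE]
  calc ∫⁻ x in E, f x ≤ ∫⁻ x in E ∩ Ω, f x := lintegral_mono_set' hcover
    _ = ∑' p : {p // IsCZCell a h (E.indicator 1) b p},
          ∫⁻ x in cell a h p.1.1 p.1.2, E.indicator f x := by
        rw [← hind, lintegral_czSet hh]
    _ ≤ ∑' p : {p // IsCZCell a h (E.indicator 1) b p}, (∫⁻ x in cell a h p.1.1 p.1.2, f x) / 2 :=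
        ENNReal.tsum_le_tsum fun p => (hind _).trans_le (hcell p)
    _ = (∫⁻ x in Ω, f x) / 2 := by
        simp only [Ω, lintegral_czSet hh, div_eq_mul_inv, ENNReal.tsum_mul_right]

lemma setLIntegral_le_two_inv_pow_mul (hf : FujiiWilsonBound f A) (hh : 0 < h) {m : ℕ}
    (hm0 : m ≠ 0) (hm : 2 ^ (n + 3) * A ≤ m) (J : ℕ) (hE : MeasurableSet E)
    (hEQ : E ⊆ cubeIco a h)
    (hvol : volume E ≤ (2⁻¹ ^ (n + 2 + (n + 1) * m)) ^ J * volume (cubeIco a h)) :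
    ∫⁻ x in E, f x ≤ 2⁻¹ ^ J * ∫⁻ x in cubeIco a h, f x := by
  induction J generalizing E with
  | zero => simpa using lintegral_mono_set hEQ
  | succ J ih =>
    set b : ℝ≥0∞ := 2⁻¹ ^ (n + 2 + (n + 1) * m)
    have hb0 : b ≠ 0 := pow_ne_zero _ (ENNReal.inv_ne_zero.2 ENNReal.ofNat_ne_top)
    have hb_top : b ≠ ⊤ := ENNReal.pow_ne_top (ENNReal.inv_ne_top.2 two_ne_zero)
    have hb1 : b < 1 := pow_lt_one₀ zero_le (ENNReal.inv_lt_one.2 one_lt_two) (by omega)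
    have hb : 2 ^ n * b = 2⁻¹ ^ (2 + (n + 1) * m) := by
      simp only [b]
      rw [show n + 2 + (n + 1) * m = n + (2 + (n + 1) * m) by ring, pow_add, ← mul_assoc,
        two_pow_mul_two_inv_pow, one_mul]
    have hEb : cellAvg a h (E.indicator 1) 0 0 ≤ b := by
      rw [cellAvg, setLIntegral_indicator_one hE, cell_zero, inter_eq_left.2 hEQ]
      refine ENNReal.div_le_of_le_mul (hvol.trans (mul_le_mul_left ?_ _))
      calc b ^ (J + 1) ≤ b ^ 1 := pow_le_pow_right_of_le_one' hb1.le (by omega)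
        _ = b := pow_one b
    have hΩ : volume (czSet a h (E.indicator 1) b) ≤ b ^ J * volume (cubeIco a h) := by
      refine (ENNReal.mul_le_mul_iff_right hb0 hb_top).1 ?_
      calc b * volume (czSet a h (E.indicator 1) b) ≤ volume E :=
            mul_volume_czSet_indicator_le hh hE b
        _ ≤ b * (b ^ J * volume (cubeIco a h)) := by rw [← mul_assoc, ← pow_succ']; exact hvol
    calc ∫⁻ x in E, f x ≤ (∫⁻ x in czSet a h (E.indicator 1) b, f x) / 2 :=
          setLIntegral_le_half_setLIntegral_czSet hf hh hm0 hm hE hEQ hb1 hb.le hEb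
      _ ≤ (2⁻¹ ^ J * ∫⁻ x in cubeIco a h, f x) / 2 := by
          gcongr
          exact ih measurableSet_czSet (czSet_subset_cubeIco hh) hΩ
      _ = 2⁻¹ ^ (J + 1) * ∫⁻ x in cubeIco a h, f x := by
          rw [div_eq_mul_inv, pow_succ]; ring

end Iteration

lemma le_two_mul_rpow_of_forall_le_pow {φ r : ℝ≥0∞} {L : ℕ} {ε : ℝ} (hε : 0 ≤ ε)
    (hLε : L * ε ≤ 1) (hr : r ≤ 1) (hφ : ∀ J : ℕ, r ≤ (2⁻¹ ^ L) ^ J → φ ≤ 2⁻¹ ^ J) :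
    φ ≤ 2 * r ^ ε := by
  classical
  by_cases hex : ∃ j, (2⁻¹ ^ L : ℝ≥0∞) ^ j < r
  swap
  · simp only [not_exists, not_lt] at hex
    have hφ0 : φ ≤ 0 := ge_of_tendsto' (ENNReal.tendsto_pow_atTop_nhds_zero_of_lt_one
      (ENNReal.inv_lt_one.2 one_lt_two)) fun J => hφ J (hex J)
    exact hφ0.trans zero_le
  obtain ⟨J, hJ⟩ : ∃ J, Nat.find hex = J + 1 := Nat.exists_eq_succ_of_ne_zero fun h0 => by
    simpa [h0] using (Nat.find_spec hex).trans_le hr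
  have hle : r ≤ (2⁻¹ ^ L) ^ J := not_lt.1 (Nat.find_min hex (by omega))
  have hlt : (2⁻¹ ^ L : ℝ≥0∞) ^ (J + 1) < r := hJ ▸ Nat.find_spec hex
  have hexp : ((L * (J + 1) : ℕ) : ℝ) * ε ≤ ((J + 1 : ℕ) : ℝ) := by
    push_cast
    nlinarith
  calc φ ≤ 2⁻¹ ^ J := hφ J hle
    _ = 2 * 2⁻¹ ^ ((J + 1 : ℕ) : ℝ) := by
        rw [ENNReal.rpow_natCast, pow_succ, mul_comm, mul_assoc,
          ENNReal.inv_mul_cancel two_ne_zero ENNReal.ofNat_ne_top, mul_one]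
    _ ≤ 2 * 2⁻¹ ^ (((L * (J + 1) : ℕ) : ℝ) * ε) := by
        gcongr 2 * ?_
        exact ENNReal.rpow_le_rpow_of_exponent_ge (ENNReal.inv_le_one.2 one_le_two) hexp
    _ = 2 * ((2⁻¹ ^ L) ^ (J + 1)) ^ ε := by rw [ENNReal.rpow_mul, ENNReal.rpow_natCast, pow_mul]
    _ ≤ 2 * r ^ ε := by gcongr

/-- Chosen so that `(n + 2 + (n + 1) m) ε ≤ 1` for `m = ⌈2 ^ (n + 3) A⌉` and `1 ≤ A`. -/
def decayConst (n : ℕ) : ℝ := (n + 1) * (2 ^ (n + 3) + 2)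

lemma decayConst_pos (n : ℕ) : 0 < decayConst n := by unfold decayConst; positivity

section MainEstimate

variable {a : Fin n → ℝ} {h : ℝ} {f : (Fin n → ℝ) → ℝ≥0∞} {A : ℝ≥0∞} {E : Set (Fin n → ℝ)}

theorem setLIntegral_div_le_two_mul_rpow (hf : FujiiWilsonBound f A) (hA : 1 ≤ A)
    (hA_ne_top : A ≠ ⊤) (hh : 0 < h) (hE : MeasurableSet E) (hEQ : E ⊆ cubeIco a h) :
    (∫⁻ x in E, f x) / (∫⁻ x in cubeIco a h, f x) ≤
      2 * (volume E / volume (cubeIco a h)) ^ (1 / (1 + decayConst n * A.toReal)) := by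
  set m := ⌈2 ^ (n + 3) * A.toReal⌉₊
  have hA_real : 1 ≤ A.toReal := by simpa using ENNReal.toReal_mono hA_ne_top hA
  have hm : 2 ^ (n + 3) * A ≤ m := by
    rw [← ENNReal.ofReal_toReal hA_ne_top, ← ENNReal.ofReal_natCast,
      show (2 : ℝ≥0∞) ^ (n + 3) = ENNReal.ofReal (2 ^ (n + 3)) by simp,
      ← ENNReal.ofReal_mul (by positivity)]
    exact ENNReal.ofReal_le_ofReal (Nat.le_ceil _)
  have hm0 : m ≠ 0 := Nat.pos_iff_ne_zero.1 (Nat.ceil_pos.2 (by positivity))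
  have hm_le : (m : ℝ) ≤ 2 ^ (n + 3) * A.toReal + 1 := (Nat.ceil_lt_add_one (by positivity)).le
  have hden : 0 < 1 + decayConst n * A.toReal := by have := decayConst_pos n; positivity
  refine le_two_mul_rpow_of_forall_le_pow (L := n + 2 + (n + 1) * m) (by positivity) ?_
    (ENNReal.div_le_of_le_mul (by rw [one_mul]; exact measure_mono hEQ)) fun J hJ => ?_
  · rw [mul_one_div, div_le_one hden, decayConst]
    push_cast
    nlinarith
  · refine ENNReal.div_le_of_le_mul (setLIntegral_le_two_inv_pow_mul hf hh hm0 hm J hE hEQ ?_)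
    exact (ENNReal.div_le_iff (volume_cubeIco_ne_zero hh) volume_cubeIco_ne_top).1 hJ

end MainEstimate

section Weights

variable {w : (Fin n → ℝ) → ℝ} {a : Fin n → ℝ} {h : ℝ}

lemma setLIntegral_le_setLIntegral_hlM_indicator (hh : 0 < h) (f : (Fin n → ℝ) → ℝ≥0∞) :
    ∫⁻ x in cubeIcc a h, f x ≤ ∫⁻ x in cubeIcc a h, hlM ((cubeIcc a h).indicator f) x := by
  have havg : cubeAvg ((cubeIcc a h).indicator f) (cubeIcc a h) * volume (cubeIcc a h) =
      ∫⁻ x in cubeIcc a h, f x := by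
    rw [cubeAvg, setLIntegral_indicator measurableSet_cubeIcc, inter_self, volume_cubeIcc,
      ENNReal.div_mul_cancel (volume_cubeIco_ne_zero hh) volume_cubeIco_ne_top]
  rw [← havg, ← setLIntegral_const]
  exact setLIntegral_mono' measurableSet_cubeIcc fun x hx =>
    cubeAvg_le_hlM (isCube_cubeIcc hh) hx

lemma div_wMeas_le_aInfConst (hh : 0 < h) :
    (∫⁻ x in cubeIcc a h, hlM ((cubeIcc a h).indicator fun y => ENNReal.ofReal (w y)) x) /
      wMeas w (cubeIcc a h) ≤ aInfConst w :=
  le_iSup₂_of_le (cubeIcc a h) (isCube_cubeIcc hh) le_rfl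

end Weights

end AInfty

end

open AInfty

namespace IsWeight

variable {n : ℕ} {w : (Fin n → ℝ) → ℝ} {a : Fin n → ℝ} {h : ℝ}

lemma aemeasurable_ofReal (hw : IsWeight w) : AEMeasurable fun x => ENNReal.ofReal (w x) :=
  ENNReal.measurable_ofReal.comp_aemeasurable hw.1.aestronglyMeasurable.aemeasurable

lemma wMeas_cubeIcc_ne_top (hw : IsWeight w) : wMeas w (cubeIcc a h) ≠ ⊤ :=
  ((hw.1.integrableOn_isCompact isCompact_cubeIcc).lintegral_lt_top).ne

lemma wMeas_cubeIcc_ne_zero (hw : IsWeight w) (hh : 0 < h) : wMeas w (cubeIcc a h) ≠ 0 := by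
  rw [wMeas, setLIntegral_cubeIcc, Ne, lintegral_eq_zero_iff' hw.aemeasurable_ofReal.restrict]
  intro hzero
  have hpos : ∀ᵐ x ∂volume.restrict (cubeIco a h), False := by
    filter_upwards [hzero, ae_restrict_of_ae hw.2] with x hx hx'
    simp only [Pi.zero_apply, ENNReal.ofReal_eq_zero] at hx
    exact hx.not_gt hx'
  exact volume_cubeIco_ne_zero hh
    (Measure.restrict_eq_zero.1 (ae_eq_bot.1 (eventually_false_iff_eq_bot.1 hpos)))

lemma one_le_aInfConst (hw : IsWeight w) : 1 ≤ aInfConst w := by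
  have hh : (0 : ℝ) < 1 := one_pos
  refine le_trans ?_ (div_wMeas_le_aInfConst (w := w) (a := 0) hh)
  rw [ENNReal.le_div_iff_mul_le (.inl (hw.wMeas_cubeIcc_ne_zero hh))
    (.inl hw.wMeas_cubeIcc_ne_top), one_mul]
  exact setLIntegral_le_setLIntegral_hlM_indicator hh _

lemma fujiiWilsonBound (hw : IsWeight w) :
    FujiiWilsonBound (fun x => ENNReal.ofReal (w x)) (aInfConst w) where
  aemeasurable := hw.aemeasurable_ofReal
  setLIntegral_ne_top a h := by
    rw [← setLIntegral_cubeIcc]; exact hw.wMeas_cubeIcc_ne_top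
  setLIntegral_hlM_le a h hh := by
    rw [← setLIntegral_cubeIcc, ← setLIntegral_cubeIcc, ← wMeas, ← ENNReal.div_le_iff
      (hw.wMeas_cubeIcc_ne_zero hh) hw.wMeas_cubeIcc_ne_top]
    exact div_wMeas_le_aInfConst hh

end IsWeight

/-- **`A_∞` measure decay.** There is a dimensional constant `τ_n` such that for every
`w ∈ A_∞`, with `ε_w = 1/(1 + τ_n [w]_{A_∞})`, every cube `Q` and measurable `E ⊆ Q` satisfy
`w(E)/w(Q) ≤ 2 (|E|/|Q|)^{ε_w}`. -/
theorem Ainfty_measure_decay (n : ℕ) :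
    ∃ τ : ℝ, 0 < τ ∧
      ∀ w : (Fin n → ℝ) → ℝ, IsWeight w → aInfConst w ≠ ∞ →
        ∀ Q : Set (Fin n → ℝ), IsCube Q →
          ∀ E : Set (Fin n → ℝ), MeasurableSet E → E ⊆ Q →
            wMeas w E / wMeas w Q ≤
              2 * (MeasureTheory.volume E / MeasureTheory.volume Q) ^
                (1 / (1 + τ * (aInfConst w).toReal)) := by
  refine ⟨decayConst n, decayConst_pos n, ?_⟩
  rintro w hw hA Q ⟨a, h, hh, rfl⟩ E hE hEQ
  have hQ : {x | ∀ i, a i ≤ x i ∧ x i ≤ a i + h} = cubeIcc a h := by ext; simp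
  rw [hQ] at hEQ ⊢
  have hE' : (E ∩ cubeIco a h : Set (Fin n → ℝ)) =ᵐ[volume] E := by
    have := (ae_eq_refl E).inter (cubeIco_ae_eq_cubeIcc (a := a) (h := h))
    rwa [inter_eq_left.2 hEQ] at this
  have hε : 0 ≤ 1 / (1 + decayConst n * (aInfConst w).toReal) := by
    have := decayConst_pos n; positivity
  rw [wMeas, wMeas, ← setLIntegral_congr hE', setLIntegral_cubeIcc, volume_cubeIcc]
  refine (setLIntegral_div_le_two_mul_rpow hw.fujiiWilsonBound hw.one_le_aInfConst hA hh
    (hE.inter measurableSet_cubeIco) inter_subset_right).trans ?_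
  gcongr
  exact inter_subset_left
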